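/- If a finite simple graph G is the disjoint union of graphs G_1, …, G_p (p ≥ 1, each G_i with at least one vertex), then z(G) = max_{1 ≤ i ≤ p} z(G_i). -/

import Mathlib

variable {V : Type*} {W : Type*}

/-- A proper coloring of `G` using colors `{1, …, k}`: colors lie in `{1,…,k}`,
adjacent vertices get different colors, and every color in `{1,…,k}` is used. -/
def IsProperKColoring (G : SimpleGraph V) (k : ℕ) (c : V → ℕ) : Prop :=
  (∀ v, c v ∈ Set.Icc 1 k) ∧
  (∀ u v, G.Adj u v → c u ≠ c v) ∧
  (∀ j ∈ Set.Icc 1 k, ∃ v, c v = j)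

/-- `u` is a b-vertex: every color `j ∈ {1,…,k}` with `j ≠ c u` appears on a neighbor of `u`. -/
def IsBVertex (G : SimpleGraph V) (k : ℕ) (c : V → ℕ) (u : V) : Prop :=
  ∀ j ∈ Set.Icc 1 k, j ≠ c u → ∃ w, G.Adj u w ∧ c w = j

/-- `u` is a nice vertex: it is a b-vertex and for every color `j ≠ c u` in `{1,…,k}`
it has a b-vertex neighbor of color `j`. -/
def IsNiceVertex (G : SimpleGraph V) (k : ℕ) (c : V → ℕ) (u : V) : Prop :=
  IsBVertex G k c u ∧
  ∀ j ∈ Set.Icc 1 k, j ≠ c u → ∃ w, G.Adj u w ∧ c w = j ∧ IsBVertex G k c w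

/-- A Grundy coloring using `k` colors: proper, and every vertex of color `j` has a
neighbor of each smaller color `i ≥ 1`. -/
def IsGrundyColoring (G : SimpleGraph V) (k : ℕ) (c : V → ℕ) : Prop :=
  IsProperKColoring G k c ∧
  ∀ i j : ℕ, 1 ≤ i → i < j → j ≤ k → ∀ v, c v = j → ∃ w, G.Adj v w ∧ c w = i

/-- A z-coloring: a Grundy coloring with a nice vertex of (top) color `k`. -/
def IsZColoring (G : SimpleGraph V) (k : ℕ) (c : V → ℕ) : Prop :=
  IsGrundyColoring G k c ∧ ∃ u, c u = k ∧ IsNiceVertex G k c u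

/-- A b*-coloring: a proper coloring with a nice vertex of (top) color `k`. -/
def IsBStarColoring (G : SimpleGraph V) (k : ℕ) (c : V → ℕ) : Prop :=
  IsProperKColoring G k c ∧ ∃ u, c u = k ∧ IsNiceVertex G k c u

/-- The z-chromatic number: largest `k` admitting a z-coloring with `k` colors. -/
noncomputable def zNum (G : SimpleGraph V) : ℕ :=
  sSup {k | ∃ c : V → ℕ, IsZColoring G k c}

/-- The b*-chromatic number: largest `k` admitting a b*-coloring with `k` colors. -/
noncomputable def bStar (G : SimpleGraph V) : ℕ :=
  sSup {k | ∃ c : V → ℕ, IsBStarColoring G k c}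

/-- `m*(G)`: the largest `k` such that some vertex `u` has `k` distinct neighbors,
each of degree at least `k`. -/
noncomputable def mStar (G : SimpleGraph V) : ℕ :=
  sSup {k | ∃ (u : V) (s : Finset V), (↑s : Set V) ⊆ G.neighborSet u ∧ s.card = k ∧
    ∀ v ∈ s, k ≤ (G.neighborSet v).ncard}

/-- The clique number `ω(G)`. -/
noncomputable def omegaNum (G : SimpleGraph V) : ℕ :=
  sSup {n | ∃ s : Finset V, G.IsNClique n s}

/-!
Restricting a z-coloring of `G` to the part containing its nice vertex gives a z-coloring of
that part, because every witness the definition asks for is a neighbour. Conversely,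
z-colorings of the parts with `z(Gᵢ)` colours glue to a z-coloring of `G` with `maxᵢ z(Gᵢ)`
colours, the nice vertex coming from a part attaining the maximum.

The gluing needs every nonempty finite graph to have some z-coloring. Take a proper colouring
by positive integers minimising `∑ᵥ (n + 1) ^ c v`. Moving a vertex down to a colour absent
from its neighbourhood lowers the weight, so the colouring is Grundy. A vertex `u` of maximum
colour `k` is then nice: if every neighbour of some colour `j < k` missed a colour in `(j, k)`,
recolouring `u` to `j` and each such neighbour to its missing colour would lower the weight
again, the loss `(n + 1) ^ k` at `u` outweighing at most `n - 1` gains of at most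
`(n + 1) ^ (k - 1)`.
-/

section zNum

variable {G : SimpleGraph V} {k : ℕ} {c : V → ℕ}

theorem IsProperKColoring.le_card [Fintype V] (hc : IsProperKColoring G k c) :
    k ≤ Fintype.card V := by
  have := Finset.card_le_card_of_surjOn c (s := Finset.univ) (t := Finset.Icc 1 k)
    fun j hj => by
      obtain ⟨v, hv⟩ := hc.2.2 j (by simpa using hj)
      exact ⟨v, Finset.mem_coe.2 (Finset.mem_univ v), hv⟩
  simpa using this

theorem bddAbove_zColorings [Finite V] (G : SimpleGraph V) :
    BddAbove {k | ∃ c : V → ℕ, IsZColoring G k c} := by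
  cases nonempty_fintype V
  exact ⟨Fintype.card V, fun _ ⟨_, hc⟩ => hc.1.1.le_card⟩

theorem IsZColoring.le_zNum [Finite V] (hc : IsZColoring G k c) : k ≤ zNum G :=
  le_csSup (bddAbove_zColorings G) ⟨c, hc⟩

theorem zNum_le {m : ℕ} (h : ∀ k c, IsZColoring G k c → k ≤ m) : zNum G ≤ m :=
  csSup_le' fun _ ⟨c, hc⟩ => h _ c hc

theorem exists_isZColoring_zNum [Finite V] (h : ∃ k c, IsZColoring G k c) :
    ∃ c, IsZColoring G (zNum G) c :=
  Nat.sSup_mem h (bddAbove_zColorings G)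

end zNum

def IsPosProperColoring (G : SimpleGraph V) (c : V → ℕ) : Prop :=
  (∀ v, 1 ≤ c v) ∧ ∀ u v, G.Adj u v → c u ≠ c v

section MinWeight

variable [Fintype V] {G : SimpleGraph V} {c : V → ℕ}

def colorWeight (c : V → ℕ) : ℕ :=
  ∑ v, (Fintype.card V + 1) ^ c v

theorem colorWeight_lt {c' : V → ℕ} {u : V} (hu : c' u < c u)
    (h : ∀ x, c' x ≤ c x ∨ c' x < c u) : colorWeight c' < colorWeight c := by
  classical
  set B := Fintype.card V + 1
  have hmono : ∀ {m n : ℕ}, m ≤ n → B ^ m ≤ B ^ n := Nat.pow_le_pow_right (by omega)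
  have key : ∀ x, B ^ c' x + (if x = u then B ^ c u else 0) ≤ B ^ c x + B ^ (c u - 1) := by
    intro x
    split_ifs with hx
    · subst hx
      have := hmono (show c' x ≤ c x - 1 by omega)
      omega
    · rcases h x with hle | hlt
      · have := hmono hle
        omega
      · have := hmono (show c' x ≤ c u - 1 by omega)
        omega
  have hsum := Finset.sum_le_sum fun x (_ : x ∈ Finset.univ) => key x
  simp only [Finset.sum_add_distrib, Finset.sum_ite_eq', Finset.mem_univ, if_true,
    Finset.sum_const, Finset.card_univ, smul_eq_mul] at hsum
  have htop : Fintype.card V * B ^ (c u - 1) < B ^ c u := by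
    rw [show c u = c u - 1 + 1 by omega, pow_succ', Nat.sub_add_cancel (by omega : 1 ≤ c u)]
    exact Nat.mul_lt_mul_of_pos_right (by omega) (by positivity)
  change ∑ x, B ^ c' x < ∑ x, B ^ c x
  omega

def IsMinWeightColoring (G : SimpleGraph V) (c : V → ℕ) : Prop :=
  IsPosProperColoring G c ∧ ∀ c', IsPosProperColoring G c' → colorWeight c ≤ colorWeight c'

theorem exists_isMinWeightColoring (G : SimpleGraph V) : ∃ c, IsMinWeightColoring G c := by
  have hne : {c | IsPosProperColoring G c}.Nonempty :=
    ⟨fun v => Fintype.equivFin V v + 1, fun _ => Nat.le_add_left 1 _,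
      fun u v huv h =>
        G.ne_of_adj huv ((Fintype.equivFin V).injective (Fin.ext (by simpa using h)))⟩
  obtain ⟨c, hc, hmin⟩ := (InvImage.wf colorWeight wellFounded_lt).has_min _ hne
  exact ⟨c, hc, fun c' hc' => not_lt.1 (hmin c' hc')⟩

theorem IsMinWeightColoring.exists_adj_of_lt (hc : IsMinWeightColoring G c) {v : V} {i : ℕ}
    (hi : 1 ≤ i) (hiv : i < c v) : ∃ w, G.Adj v w ∧ c w = i := by
  classical
  by_contra! hfree
  have hproper : IsPosProperColoring G (Function.update c v i) := by
    refine ⟨fun x => ?_, fun x y hxy => ?_⟩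
    · rcases eq_or_ne x v with rfl | hx
      · simpa using hi
      · simpa [hx] using hc.1.1 x
    · simp only [Function.update_apply]
      split_ifs with hx hy hy <;> subst_vars
      · exact absurd hxy G.irrefl
      · exact (hfree y hxy).symm
      · exact hfree x hxy.symm
      · exact hc.1.2 x y hxy
  have hlt : colorWeight (Function.update c v i) < colorWeight c :=
    colorWeight_lt (u := v) (by simpa using hiv) fun x => by
      rcases eq_or_ne x v with rfl | hx
      · simp [hiv]
      · simp [hx]
  exact absurd (hc.2 _ hproper) (not_le.2 hlt)

theorem IsMinWeightColoring.exists_adj_forall_exists_adj (hc : IsMinWeightColoring G c)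
    {u : V} {j : ℕ} (hj : 1 ≤ j) (hju : j < c u) :
    ∃ w, G.Adj u w ∧ c w = j ∧ ∀ l, j < l → l ≤ c u → ∃ x, G.Adj w x ∧ c x = l := by
  classical
  by_contra! hmiss
  have hgap :
      ∀ w, G.Adj u w → c w = j → ∃ l, j < l ∧ l < c u ∧ ∀ x, G.Adj w x → c x ≠ l := by
    intro w huw hw
    obtain ⟨l, hjl, hlu, hl⟩ := hmiss w huw hw
    exact ⟨l, hjl, lt_of_le_of_ne hlu fun h => hl u huw.symm h.symm, hl⟩
  choose I hI using hgap
  let c' : V → ℕ := fun x =>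
    if x = u then j else if h : G.Adj u x ∧ c x = j then I x h.1 h.2 else c x
  have hproper : IsPosProperColoring G c' := by
    refine ⟨fun x => ?_, fun x y hxy => ?_⟩
    · simp only [c']
      split_ifs with hx h
      · exact hj
      · exact hj.trans (hI x h.1 h.2).1.le
      · exact hc.1.1 x
    · have hcxy := hc.1.2 x y hxy
      simp only [c']
      split_ifs with hx hy hyN hxN hy hyN hy hyN
      · exact absurd (hx ▸ hy ▸ hxy) G.irrefl
      · exact (hI y hyN.1 hyN.2).1.ne
      · exact fun h => hyN ⟨hx ▸ hxy, h.symm⟩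
      · exact (hI x hxN.1 hxN.2).1.ne'
      · exact absurd (hxN.2.trans hyN.2.symm) hcxy
      · exact fun h => (hI x hxN.1 hxN.2).2.2 y hxy h.symm
      · exact fun h => hxN ⟨hy ▸ hxy.symm, h⟩
      · exact (hI y hyN.1 hyN.2).2.2 x hxy.symm
      · exact hcxy
  have hlt : colorWeight c' < colorWeight c :=
    colorWeight_lt (u := u) (by simpa [c'] using hju) fun x => by
      simp only [c']
      split_ifs with hx h
      · exact .inr (hx ▸ hju)
      · exact .inr (hI x h.1 h.2).2.1
      · exact .inl le_rfl
  exact absurd (hc.2 _ hproper) (not_le.2 hlt)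

end MinWeight

theorem isBVertex_of_exists_adj {G : SimpleGraph V} {k : ℕ} {c : V → ℕ} {w : V}
    (hbelow : ∀ i, 1 ≤ i → i < c w → ∃ x, G.Adj w x ∧ c x = i)
    (habove : ∀ l, c w < l → l ≤ k → ∃ x, G.Adj w x ∧ c x = l) : IsBVertex G k c w :=
  fun j hj hjw => (lt_or_gt_of_ne hjw).elim (hbelow j hj.1) fun h => habove j h hj.2

theorem exists_isZColoring [Finite V] [Nonempty V] (G : SimpleGraph V) :
    ∃ k c, IsZColoring G k c := by
  cases nonempty_fintype V
  obtain ⟨c, hc⟩ := exists_isMinWeightColoring G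
  obtain ⟨u, hu⟩ := Finite.exists_max c
  have hbelow (v : V) (i : ℕ) := hc.exists_adj_of_lt (v := v) (i := i)
  refine ⟨c u, c, ⟨⟨fun v => ⟨hc.1.1 v, hu v⟩, hc.1.2, fun j hj => ?_⟩,
    fun i j hi hij _ v hv => hbelow v i hi (hv ▸ hij)⟩, u, rfl, ?_, fun j hj hju => ?_⟩
  · rcases hj.2.lt_or_eq with hlt | rfl
    · obtain ⟨w, -, hw⟩ := hbelow u j hj.1 hlt
      exact ⟨w, hw⟩
    · exact ⟨u, rfl⟩
  · exact isBVertex_of_exists_adj (hbelow u) fun l hl hl' => absurd hl' (not_le.2 hl)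
  · obtain ⟨w, huw, hw, habove⟩ :=
      hc.exists_adj_forall_exists_adj hj.1 (lt_of_le_of_ne hj.2 hju)
    exact ⟨w, huw, hw, isBVertex_of_exists_adj (hbelow w) (hw ▸ habove)⟩

section Induce

variable {G : SimpleGraph V} {k : ℕ} {c : V → ℕ} {S : Set V}

theorem IsBVertex.of_induce {u : S} (h : IsBVertex (G.induce S) k (fun x => c x) u) :
    IsBVertex G k c u :=
  fun j hj hju => let ⟨w, huw, hw⟩ := h j hj hju; ⟨w, huw, hw⟩

theorem IsNiceVertex.of_induce {u : S} (h : IsNiceVertex (G.induce S) k (fun x => c x) u) :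
    IsNiceVertex G k c u :=
  ⟨h.1.of_induce, fun j hj hju =>
    let ⟨w, huw, hw, hwb⟩ := h.2 j hj hju; ⟨w, huw, hw, hwb.of_induce⟩⟩

variable (hS : ∀ u v, G.Adj u v → u ∈ S → v ∈ S)
include hS

theorem IsBVertex.induce {u : V} (hu : u ∈ S) (h : IsBVertex G k c u) :
    IsBVertex (G.induce S) k (fun x => c x) ⟨u, hu⟩ :=
  fun j hj hju => let ⟨w, huw, hw⟩ := h j hj hju; ⟨⟨w, hS u w huw hu⟩, huw, hw⟩

theorem IsNiceVertex.induce {u : V} (hu : u ∈ S) (h : IsNiceVertex G k c u) :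
    IsNiceVertex (G.induce S) k (fun x => c x) ⟨u, hu⟩ :=
  ⟨h.1.induce hS hu, fun j hj hju =>
    let ⟨w, huw, hw, hwb⟩ := h.2 j hj hju
    ⟨⟨w, hS u w huw hu⟩, huw, hw, hwb.induce hS _⟩⟩

theorem IsGrundyColoring.induce_isZColoring (hc : IsGrundyColoring G k c) {u : V} (hu : u ∈ S)
    (hcu : c u = k) (hnice : IsNiceVertex G k c u) :
    IsZColoring (G.induce S) k (fun x => c x) := by
  refine ⟨⟨⟨fun x => hc.1.1 x, fun x y hxy => hc.1.2.1 x y hxy, fun j hj => ?_⟩,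
    fun i j hi hij hjk v hv => ?_⟩, ⟨u, hu⟩, hcu, hnice.induce hS hu⟩
  · by_cases hjk : j = k
    · exact ⟨⟨u, hu⟩, hcu.trans hjk.symm⟩
    · obtain ⟨w, huw, hw⟩ := hnice.1 j hj (hcu ▸ hjk)
      exact ⟨⟨w, hS u w huw hu⟩, hw⟩
  · obtain ⟨w, hvw, hw⟩ := hc.2 i j hi hij hjk v hv
    exact ⟨⟨w, hS v w hvw v.2⟩, hvw, hw⟩

end Induce

section Fibers

variable {ι : Type*} {G : SimpleGraph V} {P : V → ι} (hedge : ∀ u v, G.Adj u v → P u = P v)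
include hedge

theorem IsZColoring.exists_induce_fiber {k : ℕ} {c : V → ℕ} (hc : IsZColoring G k c) :
    ∃ i, IsZColoring (G.induce {w | P w = i}) k (fun x => c x) :=
  let ⟨u, hcu, hnice⟩ := hc.2
  ⟨P u, hc.1.induce_isZColoring (fun x y hxy hx => (hedge x y hxy).symm.trans hx) rfl hcu
    hnice⟩

theorem IsZColoring.of_induce_fibers {c : V → ℕ} {k : ι → ℕ} {i₀ : ι} (hk : ∀ i, k i ≤ k i₀)
    (hgrundy : ∀ i, IsGrundyColoring (G.induce {w | P w = i}) (k i) (fun x => c x))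
    (hz : IsZColoring (G.induce {w | P w = i₀}) (k i₀) (fun x => c x)) :
    IsZColoring G (k i₀) c := by
  refine ⟨⟨⟨fun v => ?_, fun x y hxy => ?_, fun j hj => ?_⟩, fun i j hi hij _ v hv => ?_⟩,
    ?_⟩
  · have hv := (hgrundy (P v)).1.1 ⟨v, rfl⟩
    exact ⟨hv.1, hv.2.trans (hk _)⟩
  · exact (hgrundy (P y)).1.2.1 ⟨x, hedge x y hxy⟩ ⟨y, rfl⟩ hxy
  · obtain ⟨x, hx⟩ := hz.1.1.2.2 j hj
    exact ⟨x, hx⟩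
  · have hjv : j ≤ k (P v) := hv ▸ ((hgrundy (P v)).1.1 ⟨v, rfl⟩).2
    obtain ⟨w, hvw, hw⟩ := (hgrundy (P v)).2 i j hi hij hjv ⟨v, rfl⟩ hv
    exact ⟨w, hvw, hw⟩
  · obtain ⟨u, hu, hnice⟩ := hz.2
    exact ⟨u, hu, hnice.of_induce⟩

end Fibers

theorem zNum_disjoint_union {ι : Type*} [Fintype ι] [Nonempty ι]
    [Fintype W] (G : SimpleGraph W) (P : W → ι)
    (hedge : ∀ u v, G.Adj u v → P u = P v)
    (hfib : ∀ i, ∃ w, P w = i) :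
    zNum G = Finset.univ.sup fun i => zNum (G.induce {w | P w = i}) := by
  refine le_antisymm (zNum_le fun k c hc => ?_) (Finset.sup_le fun i _ => ?_)
  · obtain ⟨i, hi⟩ := hc.exists_induce_fiber hedge
    exact hi.le_zNum.trans
      (Finset.le_sup (f := fun i => zNum (G.induce {w | P w = i})) (Finset.mem_univ i))
  · have hz (i : ι) :
        ∃ c, IsZColoring (G.induce {w | P w = i}) (zNum (G.induce {w | P w = i})) c :=
      have : Nonempty {w | P w = i} := let ⟨w, hw⟩ := hfib i; ⟨⟨w, hw⟩⟩
      exists_isZColoring_zNum (exists_isZColoring _)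
    choose cc hcc using hz
    have hglue (i : ι) : (fun x : {w | P w = i} => cc (P x) ⟨x, rfl⟩) = cc i :=
      funext fun ⟨_, hx⟩ => by subst hx; rfl
    obtain ⟨i₀, hi₀⟩ := Finite.exists_max fun i => zNum (G.induce {w | P w = i})
    have hG : IsZColoring G (zNum (G.induce {w | P w = i₀})) fun w => cc (P w) ⟨w, rfl⟩ :=
      .of_induce_fibers hedge hi₀ (fun i => hglue i ▸ (hcc i).1) (hglue i₀ ▸ hcc i₀)
    exact (hi₀ i).trans hG.le_zNum
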